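/- Let k ≥ 4 be an even integer and j ≥ 0 an integer, and define Z : ℝ → ℂ by Z(s) = (iteratedDeriv j F)(s), where F : ℂ → ℂ is given by F(x) = ζ'(x)/ζ(x) − ζ'(k−x)/ζ(k−x) (with ζ the Riemann zeta function and ζ' its derivative). Then for every real s ∈ [k/2, k−2] the value Z(s) has zero imaginary part and nonnegative real part, Re Z(s) > 0 for k/2 < s ≤ k−2, and the function s ↦ Re Z(s) is strictly increasing on [k/2, k−2]. -/

import Mathlib

/-!
Where `1 < Re x` and `1 < Re (k - x)` we have `ζ'/ζ = -L(Λ)`, so differentiating the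
L-series termwise, the `j`-th derivative of `F` at a real `s` is the real Dirichlet series
`∑ (log n)^j Λ(n) (n^(s-k) - (-1)^j n^(-s))`. For `|e| ≤ 1` the identity
`(b^(t-k) - e b^(-t)) - (b^(s-k) - e b^(-s)) = (b^t - b^s) (b^(-k) + e b^(-(s+t)))`
shows that each term is nondecreasing in `s ≥ k/2`, strictly for `n = 2`; each term is also
nonnegative at `s = k/2`. Summing gives all three claims.
-/

open Complex Set ArithmeticFunction LSeries Topology
open scoped LSeries.notation

noncomputable section

namespace ZetaReflection

section RpowCombination

variable {b e κ s t : ℝ}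

lemma rpow_sub_mul_rpow_neg_sub_eq (hb : 0 < b) :
    (b ^ (t - κ) - e * b ^ (-t)) - (b ^ (s - κ) - e * b ^ (-s)) =
      (b ^ t - b ^ s) * (b ^ (-κ) + e * b ^ (-(s + t))) := by
  simp only [Real.rpow_sub hb, Real.rpow_neg hb.le, Real.rpow_add hb]
  field_simp
  ring

lemma monotoneOn_rpow_sub_mul_rpow_neg (hb : 1 ≤ b) (he : |e| ≤ 1) :
    MonotoneOn (fun s => b ^ (s - κ) - e * b ^ (-s)) (Ici (κ / 2)) := by
  intro s hs t _ hst
  rw [← sub_nonneg, rpow_sub_mul_rpow_neg_sub_eq (zero_lt_one.trans_le hb)]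
  have hdecay : b ^ (-(s + t)) ≤ b ^ (-κ) :=
    Real.rpow_le_rpow_of_exponent_le hb (by linarith [mem_Ici.mp hs])
  have hpos : 0 ≤ b ^ (-(s + t)) := Real.rpow_nonneg (zero_le_one.trans hb) _
  refine mul_nonneg (sub_nonneg.mpr (Real.rpow_le_rpow_of_exponent_le hb hst)) ?_
  nlinarith [(abs_le.mp he).1]

lemma strictMonoOn_rpow_sub_mul_rpow_neg (hb : 1 < b) (he : |e| ≤ 1) :
    StrictMonoOn (fun s => b ^ (s - κ) - e * b ^ (-s)) (Ici (κ / 2)) := by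
  intro s hs t _ hst
  rw [← sub_pos, rpow_sub_mul_rpow_neg_sub_eq (zero_lt_one.trans hb)]
  have hdecay : b ^ (-(s + t)) < b ^ (-κ) :=
    Real.rpow_lt_rpow_of_exponent_lt hb (by linarith [mem_Ici.mp hs])
  have hpos : 0 ≤ b ^ (-(s + t)) := Real.rpow_nonneg (zero_le_one.trans hb.le) _
  refine mul_pos (sub_pos.mpr (Real.rpow_lt_rpow_of_exponent_lt hb hst)) ?_
  nlinarith [(abs_le.mp he).1]

end RpowCombination

lemma strictMonoOn_tsum {α ι : Type*} [Preorder α] {f : ι → α → ℝ} {S : Set α}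
    (hsum : ∀ s ∈ S, Summable fun i => f i s) (hmono : ∀ i, MonotoneOn (f i) S)
    (i₀ : ι) (hstrict : StrictMonoOn (f i₀) S) :
    StrictMonoOn (fun s => ∑' i, f i s) S :=
  fun _ ha _ hb hab => (hsum _ ha).tsum_lt_tsum (fun i => hmono i ha hb hab.le)
    (hstrict ha hb hab) (hsum _ hb)

lemma LSeries_ofReal {f : ℕ → ℝ} {x : ℝ} (hx : x ≠ 0) :
    L (fun n => (f n : ℂ)) x = ((∑' n, f n / (n : ℝ) ^ x : ℝ) : ℂ) := by
  rw [LSeries, ofReal_tsum]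
  congr 1 with n
  rcases eq_or_ne n 0 with rfl | hn
  · simp [Real.zero_rpow hx]
  · rw [term_of_ne_zero hn, ofReal_div, ofReal_cpow n.cast_nonneg, ofReal_natCast]

lemma abscissaOfAbsConv_vonMangoldt_le_one : abscissaOfAbsConv ↗Λ ≤ 1 :=
  abscissaOfAbsConv_le_of_forall_lt_LSeriesSummable fun _ hy =>
    LSeriesSummable_vonMangoldt (by simpa using hy)

lemma logMul_iterate_vonMangoldt (j : ℕ) :
    logMul^[j] ↗Λ = fun n : ℕ => ((Real.log n ^ j * Λ n : ℝ) : ℂ) := by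
  induction j with
  | zero => simp
  | succ j ih =>
    ext n
    rw [Function.iterate_succ_apply', ih, logMul, ← natCast_log]
    push_cast
    ring

lemma summable_logPow_mul_vonMangoldt_div_rpow (j : ℕ) {t : ℝ} (ht : 1 < t) :
    Summable fun n : ℕ => Real.log n ^ j * Λ n / (n : ℝ) ^ t := by
  refine summable_real_of_abscissaOfAbsConv_lt ?_
  rw [← logMul_iterate_vonMangoldt, absicssaOfAbsConv_logPowMul]
  exact abscissaOfAbsConv_vonMangoldt_le_one.trans_lt (mod_cast ht)

def zetaLogDerivDiff (κ : ℂ) (x : ℂ) : ℂ :=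
  deriv riemannZeta x / riemannZeta x - deriv riemannZeta (κ - x) / riemannZeta (κ - x)

lemma iteratedDeriv_zetaLogDerivDiff {κ x : ℂ} (hx : 1 < x.re) (hκx : 1 < (κ - x).re)
    (j : ℕ) :
    iteratedDeriv j (zetaLogDerivDiff κ) x =
      L (logMul^[j] ↗Λ) (κ - x) - (-1) ^ j * L (logMul^[j] ↗Λ) x := by
  have hU : IsOpen {y : ℂ | 1 < y.re ∧ 1 < (κ - y).re} :=
    (isOpen_lt continuous_const continuous_re).inter
      (isOpen_lt continuous_const (continuous_re.comp (continuous_const.sub continuous_id)))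
  have heq : zetaLogDerivDiff κ =ᶠ[𝓝 x] fun y => L ↗Λ (κ - y) - L ↗Λ y := by
    filter_upwards [hU.mem_nhds ⟨hx, hκx⟩] with y hy
    rw [zetaLogDerivDiff, LSeries_vonMangoldt_eq_deriv_riemannZeta_div hy.1,
      LSeries_vonMangoldt_eq_deriv_riemannZeta_div hy.2]
    ring
  have habs {y : ℂ} (hy : 1 < y.re) : abscissaOfAbsConv ↗Λ < y.re :=
    abscissaOfAbsConv_vonMangoldt_le_one.trans_lt (mod_cast hy)
  have hL {y : ℂ} (hy : 1 < y.re) : ContDiffAt ℂ j (L ↗Λ) y :=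
    (LSeries_analyticOnNhd _ y (habs hy)).contDiffAt
  have hLreflect : ContDiffAt ℂ j (fun y => L ↗Λ (κ - y)) x :=
    (hL hκx).comp x (contDiffAt_const.sub contDiffAt_id)
  rw [heq.iteratedDeriv_eq, iteratedDeriv_fun_sub hLreflect (hL hx),
    iteratedDeriv_comp_const_sub]
  simp only [smul_eq_mul]
  rw [LSeries_iteratedDeriv _ (habs hκx), LSeries_iteratedDeriv _ (habs hx),
    ← mul_assoc, ← mul_pow]
  norm_num

def zetaLogDerivDiffTerm (κ : ℝ) (j n : ℕ) (s : ℝ) : ℝ :=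
  Real.log n ^ j * Λ n * ((n : ℝ) ^ (s - κ) - (-1) ^ j * (n : ℝ) ^ (-s))

lemma zetaLogDerivDiffTerm_eq (κ : ℝ) (j n : ℕ) (s : ℝ) :
    zetaLogDerivDiffTerm κ j n s = Real.log n ^ j * Λ n / (n : ℝ) ^ (κ - s) -
      (-1) ^ j * (Real.log n ^ j * Λ n / (n : ℝ) ^ s) := by
  rw [zetaLogDerivDiffTerm, ← neg_sub κ, Real.rpow_neg n.cast_nonneg,
    Real.rpow_neg n.cast_nonneg]
  ring

lemma summable_zetaLogDerivDiffTerm (j : ℕ) {κ s : ℝ} (hs : 1 < s) (hκs : 1 < κ - s) :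
    Summable (zetaLogDerivDiffTerm κ j · s) := by
  simpa only [zetaLogDerivDiffTerm_eq] using
    (summable_logPow_mul_vonMangoldt_div_rpow j hκs).sub
      ((summable_logPow_mul_vonMangoldt_div_rpow j hs).mul_left _)

lemma iteratedDeriv_zetaLogDerivDiff_ofReal (j : ℕ) {κ s : ℝ} (hs : 1 < s)
    (hκs : 1 < κ - s) :
    iteratedDeriv j (zetaLogDerivDiff κ) s =
      ((∑' n, zetaLogDerivDiffTerm κ j n s : ℝ) : ℂ) := by
  have hs' : 1 < (s : ℂ).re := by simpa using hs
  have hκs' : 1 < ((κ : ℂ) - s).re := by simpa using hκs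
  rw [iteratedDeriv_zetaLogDerivDiff hs' hκs', ← ofReal_sub, logMul_iterate_vonMangoldt,
    LSeries_ofReal (by linarith), LSeries_ofReal (by linarith)]
  simp only [zetaLogDerivDiffTerm_eq]
  rw [(summable_logPow_mul_vonMangoldt_div_rpow j hκs).tsum_sub
      ((summable_logPow_mul_vonMangoldt_div_rpow j hs).mul_left _), tsum_mul_left]
  push_cast
  rfl

lemma logPow_mul_vonMangoldt_nonneg (j n : ℕ) : 0 ≤ Real.log n ^ j * Λ n :=
  mul_nonneg (pow_nonneg (Real.log_natCast_nonneg n) j) vonMangoldt_nonneg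

lemma monotoneOn_zetaLogDerivDiffTerm (κ : ℝ) (j n : ℕ) :
    MonotoneOn (zetaLogDerivDiffTerm κ j n) (Ici (κ / 2)) := by
  rcases eq_or_ne n 0 with rfl | hn
  · intro s _ t _ _
    simp [zetaLogDerivDiffTerm]
  have hmono := monotoneOn_rpow_sub_mul_rpow_neg (κ := κ)
    (Nat.one_le_cast.mpr (Nat.one_le_iff_ne_zero.mpr hn)) (abs_neg_one_pow j).le
  exact fun s hs t ht hst =>
    mul_le_mul_of_nonneg_left (hmono hs ht hst) (logPow_mul_vonMangoldt_nonneg j n)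

lemma strictMonoOn_zetaLogDerivDiffTerm_two (κ : ℝ) (j : ℕ) :
    StrictMonoOn (zetaLogDerivDiffTerm κ j 2) (Ici (κ / 2)) := by
  have hcoeff : 0 < Real.log (2 : ℕ) ^ j * Λ 2 := by
    have := Real.log_pos (one_lt_two : (1 : ℝ) < 2)
    rw [vonMangoldt_apply_prime Nat.prime_two, Nat.cast_ofNat]
    positivity
  have hmono := strictMonoOn_rpow_sub_mul_rpow_neg (κ := κ)
    (by norm_num : (1 : ℝ) < (2 : ℕ)) (abs_neg_one_pow j).le
  exact fun s hs t ht hst => mul_lt_mul_of_pos_left (hmono hs ht hst) hcoeff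

lemma zetaLogDerivDiffTerm_half_nonneg (κ : ℝ) (j n : ℕ) :
    0 ≤ zetaLogDerivDiffTerm κ j n (κ / 2) := by
  have hsymm : (n : ℝ) ^ (κ / 2 - κ) = (n : ℝ) ^ (-(κ / 2)) := by ring_nf
  rw [zetaLogDerivDiffTerm, hsymm, ← one_sub_mul]
  refine mul_nonneg (logPow_mul_vonMangoldt_nonneg j n)
    (mul_nonneg ?_ (Real.rpow_nonneg n.cast_nonneg _))
  linarith [le_abs_self ((-1 : ℝ) ^ j), abs_neg_one_pow (α := ℝ) j]

end ZetaReflection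

open ZetaReflection in
theorem zetaLogDeriv_diff_iteratedDeriv_pos_and_strictMonoOn
    (k : ℕ) (j : ℕ)
    (Z : ℝ → ℂ)
    (hZ : Z = fun s : ℝ => iteratedDeriv j
      (fun x : ℂ => deriv riemannZeta x / riemannZeta x -
        deriv riemannZeta ((k : ℂ) - x) / riemannZeta ((k : ℂ) - x)) (s : ℂ)) :
    (∀ s : ℝ, s ∈ Set.Icc ((k : ℝ) / 2) ((k : ℝ) - 2) → (Z s).im = 0 ∧ 0 ≤ (Z s).re) ∧
      (∀ s : ℝ, (k : ℝ) / 2 < s → s ≤ (k : ℝ) - 2 → 0 < (Z s).re) ∧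
      StrictMonoOn (fun s : ℝ => (Z s).re) (Set.Icc ((k : ℝ) / 2) ((k : ℝ) - 2)) := by
  set I := Icc ((k : ℝ) / 2) ((k : ℝ) - 2)
  set S : ℝ → ℝ := fun s => ∑' n, zetaLogDerivDiffTerm k j n s
  have hI {s : ℝ} (hs : s ∈ I) : 1 < s ∧ 1 < (k : ℝ) - s := by
    constructor <;> linarith [hs.1, hs.2]
  have hZS {s : ℝ} (hs : s ∈ I) : Z s = S s := by
    rw [hZ, ← iteratedDeriv_zetaLogDerivDiff_ofReal j (hI hs).1 (hI hs).2, ofReal_natCast]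
    rfl
  have hS : StrictMonoOn S I :=
    strictMonoOn_tsum (fun s hs => summable_zetaLogDerivDiffTerm j (hI hs).1 (hI hs).2)
      (fun n => (monotoneOn_zetaLogDerivDiffTerm k j n).mono fun _ hs => hs.1) 2
      ((strictMonoOn_zetaLogDerivDiffTerm_two k j).mono fun _ hs => hs.1)
  have hS_half : 0 ≤ S (k / 2) := tsum_nonneg (zetaLogDerivDiffTerm_half_nonneg k j)
  have hhalf {s : ℝ} (hs : s ∈ I) : (k : ℝ) / 2 ∈ I := ⟨le_rfl, hs.1.trans hs.2⟩
  refine ⟨fun s hs => ?_, fun s hs hs' => ?_, fun s hs t ht hst => ?_⟩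
  · rw [hZS hs, ofReal_im, ofReal_re]
    exact ⟨rfl, hS_half.trans (hS.monotoneOn (hhalf hs) hs hs.1)⟩
  · have hsI : s ∈ I := ⟨hs.le, hs'⟩
    rw [hZS hsI, ofReal_re]
    exact hS_half.trans_lt (hS (hhalf hsI) hsI hs)
  · simp only [hZS hs, hZS ht, ofReal_re]
    exact hS hs ht hst
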